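/- Define ψ(z, ν, θ) = φ_H(1 − z, 1 − ν, θ) where φ_H(z, ν, θ) = (1 − zν/(ν² + θ))·ln((θ + ν(ν − z))/θ) + (zν/(ν² + θ))·ln(z/ν). Then for 0 < μ < z < 1 and 0 < θ < 1, the partial derivative of ψ(z, μ, θ) with respect to μ is ≤ 0. -/

import Mathlib

/-- Hoeffding's mean–variance exponent
`φ_H(z, ν, θ) = (1 − zν/(ν²+θ))·ln((θ + ν(ν−z))/θ) + (zν/(ν²+θ))·ln(z/ν)`. -/
noncomputable def phiH (z ν θ : ℝ) : ℝ :=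
  (1 - z * ν / (ν ^ 2 + θ)) * Real.log ((θ + ν * (ν - z)) / θ) +
    (z * ν / (ν ^ 2 + θ)) * Real.log (z / ν)

/-- `ψ(z, ν, θ) = φ_H(1 − z, 1 − ν, θ)`. -/
noncomputable def psiH (z ν θ : ℝ) : ℝ := phiH (1 - z) (1 - ν) θ

/-!
Since `ψ(z, ·, θ) = φ_H(1 - z, 1 - ·, θ)`, it suffices that `∂φ_H/∂ν ≥ 0` for `0 < z < ν`.
With `p(ν) = zν/(ν² + θ)` that derivative is `p'(ν) · ln r + 2(ν - z)/(ν² + θ)`, where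
`r = zθ / (ν(θ + ν(ν - z)))`. If `ν² ≥ θ` then `p'(ν) ≤ 0` and `r ≤ 1`, so both terms are
nonnegative. If `ν² < θ` then `p'(ν) > 0`, and `ln r ≥ 1 - 1/r` bounds the derivative below
by exactly `(ν - z)/θ`.
-/

open Real

noncomputable def phiHDeriv (z ν θ : ℝ) : ℝ :=
  z * (θ - ν ^ 2) / (ν ^ 2 + θ) ^ 2 * (log (z / ν) - log ((θ + ν * (ν - z)) / θ)) +
    2 * (ν - z) / (ν ^ 2 + θ)

section

variable {z ν θ : ℝ}

theorem hasDerivAt_phiH (hz : 0 < z) (hzν : z < ν) (hθ : 0 < θ) :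
    HasDerivAt (fun x => phiH z x θ) (phiHDeriv z ν θ) ν := by
  have hν : 0 < ν := hz.trans hzν
  have hden : 0 < ν ^ 2 + θ := by positivity
  have harg : 0 < θ + ν * (ν - z) := by nlinarith
  have hweight : HasDerivAt (fun x => z * x / (x ^ 2 + θ))
      (z * (θ - ν ^ 2) / (ν ^ 2 + θ) ^ 2) ν :=
    (((hasDerivAt_id' ν).const_mul z).fun_div ((hasDerivAt_pow 2 ν).add_const θ)
      hden.ne').congr_deriv (by field_simp; ring)
  have hlog₁ : HasDerivAt (fun x => log ((θ + x * (x - z)) / θ))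
      ((2 * ν - z) / (θ + ν * (ν - z))) ν :=
    (((((hasDerivAt_id' ν).fun_mul ((hasDerivAt_id' ν).sub_const z)).const_add θ).div_const
      θ).log (by positivity)).congr_deriv (by field_simp; ring)
  have hlog₂ : HasDerivAt (fun x => log (z / x)) (-ν⁻¹) ν :=
    (((hasDerivAt_const ν z).fun_div (hasDerivAt_id' ν) hν.ne').log
      (by positivity)).congr_deriv (by field_simp; ring)
  refine (((hweight.const_sub 1).mul hlog₁).add (hweight.mul hlog₂)).congr_deriv ?_
  unfold phiHDeriv
  field_simp
  ring

theorem phiHDeriv_nonneg (hz : 0 < z) (hzν : z < ν) (hθ : 0 < θ) :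
    0 ≤ phiHDeriv z ν θ := by
  have hν : 0 < ν := hz.trans hzν
  have harg : 0 < θ + ν * (ν - z) := by nlinarith
  have hlog : log (z / ν) - log ((θ + ν * (ν - z)) / θ) =
      log (z * θ / (ν * (θ + ν * (ν - z)))) := by
    rw [← log_div (by positivity) (by positivity)]
    congr 1
    field_simp
  set r := z * θ / (ν * (θ + ν * (ν - z))) with hr
  have hr_pos : 0 < r := by positivity
  unfold phiHDeriv
  rw [hlog]
  rcases le_or_gt θ (ν ^ 2) with hθν | hνθ
  · have hweight : z * (θ - ν ^ 2) / (ν ^ 2 + θ) ^ 2 ≤ 0 :=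
      div_nonpos_of_nonpos_of_nonneg (by nlinarith) (by positivity)
    have hr_le : r ≤ 1 := by
      rw [hr, div_le_one (by positivity)]
      nlinarith
    exact add_nonneg (mul_nonneg_of_nonpos_of_nonpos hweight (log_nonpos hr_pos.le hr_le))
      (div_nonneg (by linarith) (by positivity))
  · have hweight : 0 ≤ z * (θ - ν ^ 2) / (ν ^ 2 + θ) ^ 2 :=
      div_nonneg (by nlinarith) (by positivity)
    calc 0 ≤ (ν - z) / θ := div_nonneg (by linarith) hθ.le
      _ = z * (θ - ν ^ 2) / (ν ^ 2 + θ) ^ 2 * (1 - r⁻¹) + 2 * (ν - z) / (ν ^ 2 + θ) := by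
        rw [hr]
        field_simp
        ring
      _ ≤ z * (θ - ν ^ 2) / (ν ^ 2 + θ) ^ 2 * log r + 2 * (ν - z) / (ν ^ 2 + θ) := by
        gcongr
        exact one_sub_inv_le_log_of_pos hr_pos

end

theorem hasDerivAt_psiH {z ν θ : ℝ} (hνz : ν < z) (hz : z < 1) (hθ : 0 < θ) :
    HasDerivAt (fun x => psiH z x θ) (-phiHDeriv (1 - z) (1 - ν) θ) ν := by
  rw [← mul_neg_one]
  exact (hasDerivAt_phiH (sub_pos.2 hz) (by linarith : 1 - z < 1 - ν) hθ).comp ν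
    ((hasDerivAt_id ν).const_sub 1)

theorem psiH_deriv_mu_nonpos (z μ θ : ℝ) (hμz : μ < z) (hz : z < 1)
    (hθ0 : 0 < θ) :
    deriv (fun ν : ℝ => psiH z ν θ) μ ≤ 0 := by
  rw [(hasDerivAt_psiH hμz hz hθ0).deriv, neg_nonpos]
  exact phiHDeriv_nonneg (sub_pos.2 hz) (by linarith) hθ0
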